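/- Let q be a prime power, d ≥ 1, let L be the lattice of all F_q-linear subspaces of F_q^{d+1} with atom set At (the one-dimensional subspaces), let F(L) = (F_a)_{a∈At} with F_a = {x ∈ L : a ≤ x}, and let α be the unique IE-vector for F(L) supported on V(F(L)). Then ‖α‖₁ = Σ_{k=0}^{d} q^{k(k+1)/2} · N_k, where N_k is the number of F_q-linear subspaces of F_q^{d+1} of dimension k+1; in particular ‖α‖₁ ≥ q^{d(d+1)/2}. -/

import Mathlib

/-!
In a finite atomistic lattice `L`, the region of `τ` in the Venn diagram of `F(L)` consists of the
`x` whose set of atoms below is exactly `τ`, so the Venn diagram is `{atoms below x | x ≠ ⊥}`.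
For `α` supported on it, the IE-conditions say that `x ↦ α(atoms below x)` sums to `1` over
every interval `(⊥, x]`. This recursion has a unique solution, namely `-μ(⊥, ·)`, hence
`‖α‖₁ = Σ_{x ≠ ⊥} |μ(⊥, x)|`.

In the subspace lattice of `F_q^{d+1}`, `μ(⊥, X) = (-1)^k q^(k choose 2)` for `dim X = k`. The
identity `Σ_{X ≤ W} μ(⊥, X) = 0` for `W ≠ 0` comes from a hyperplane `H` of `W`: for each
`U ≤ H` there are `q^(dim H - dim U)` subspaces `X ≤ W` with `X ⊓ H = U` and `X ≰ H`, each
of dimension `dim U + 1`, so `Σ_{X ≤ W} = (1 - q^(dim H)) Σ_{X ≤ H}`.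
-/

open Finset
open scoped Classical

variable {ι S : Type*}

def region (F : ι → Set S) (τ : Finset ι) : Set S :=
  (⋂ i ∈ τ, F i) \ ⋃ i ∉ τ, F i

def venn (F : ι → Set S) : Set (Finset ι) :=
  {τ | τ.Nonempty ∧ (region F τ).Nonempty}

def nerve (F : ι → Set S) : Set (Finset ι) :=
  {σ | σ.Nonempty ∧ (⋂ i ∈ σ, F i).Nonempty}

def IsIEVector (F : ι → Set S) (x : Finset ι → ℝ) : Prop :=
  (∀ σ, σ ∉ nerve F → x σ = 0) ∧
  ∀ τ ∈ venn F, (∑ σ ∈ τ.powerset.filter (· ∈ nerve F), x σ) = 1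

noncomputable instance atomsFintype (K : Type) [Field K] [Fintype K] (d : ℕ) :
    Fintype {W : Submodule K (Fin (d + 1) → K) // IsAtom W} :=
  have : Finite (Submodule K (Fin (d + 1) → K)) :=
    Finite.of_injective _ SetLike.coe_injective
  Fintype.ofFinite _

open Module

lemma venn_subset_nerve (F : ι → Set S) : venn F ⊆ nerve F :=
  fun _ ⟨hτ, x, hx⟩ => ⟨hτ, x, hx.1⟩

section AtomFamily

variable {L : Type*} [PartialOrder L] [OrderBot L]

/-- The family `F(L) = (F_a)_{a ∈ At}`. -/
def atomIci (L : Type*) [PartialOrder L] [OrderBot L] : {a : L // IsAtom a} → Set L :=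
  fun a => Set.Ici a.val

variable [Fintype {a : L // IsAtom a}]

noncomputable def atomsBelow (x : L) : Finset {a : L // IsAtom a} :=
  univ.filter fun a => a.val ≤ x

@[simp]
lemma mem_atomsBelow {x : L} {a : {a : L // IsAtom a}} : a ∈ atomsBelow x ↔ a.val ≤ x := by
  simp [atomsBelow]

lemma atomsBelow_subset_atomsBelow [IsAtomistic L] {x y : L} :
    atomsBelow x ⊆ atomsBelow y ↔ x ≤ y := by
  rw [le_iff_atom_le_imp (a := x)]
  exact ⟨fun h c hc hcx => mem_atomsBelow.1 (h ((mem_atomsBelow (a := ⟨c, hc⟩)).2 hcx)),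
    fun h a ha => mem_atomsBelow.2 (h a.1 a.2 (mem_atomsBelow.1 ha))⟩

lemma atomsBelow_injective [IsAtomistic L] : Function.Injective (atomsBelow (L := L)) :=
  fun _ _ h => le_antisymm (atomsBelow_subset_atomsBelow.1 h.le)
    (atomsBelow_subset_atomsBelow.1 h.ge)

lemma atomsBelow_nonempty_iff [IsAtomic L] {x : L} : (atomsBelow x).Nonempty ↔ x ≠ ⊥ := by
  refine ⟨fun ⟨a, ha⟩ hx => a.2.1 (le_bot_iff.1 (hx ▸ mem_atomsBelow.1 ha)), fun hx => ?_⟩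
  obtain ⟨a, ha, hax⟩ := (eq_bot_or_exists_atom_le x).resolve_left hx
  exact ⟨⟨a, ha⟩, mem_atomsBelow.2 hax⟩

lemma mem_region_atomIci_iff {σ : Finset {a : L // IsAtom a}} {x : L} :
    x ∈ region (atomIci L) σ ↔ atomsBelow x = σ := by
  simp only [region, atomIci, Set.mem_sdiff, Set.mem_iInter, Set.mem_iUnion, Set.mem_Ici,
    not_exists, Finset.ext_iff, mem_atomsBelow]
  exact ⟨fun ⟨h₁, h₂⟩ a => ⟨fun hax => by_contra fun ha => h₂ a ha hax, h₁ a⟩,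
    fun h => ⟨fun a => (h a).2, fun a ha hax => ha ((h a).1 hax)⟩⟩

lemma mem_venn_atomIci_iff [IsAtomic L] {σ : Finset {a : L // IsAtom a}} :
    σ ∈ venn (atomIci L) ↔ ∃ x ≠ ⊥, atomsBelow x = σ := by
  simp only [venn, Set.mem_ofPred_eq, Set.Nonempty, mem_region_atomIci_iff]
  constructor
  · rintro ⟨hne, x, rfl⟩
    exact ⟨x, atomsBelow_nonempty_iff.1 hne, rfl⟩
  · rintro ⟨x, hx, rfl⟩
    exact ⟨atomsBelow_nonempty_iff.2 hx, x, rfl⟩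

lemma image_atomsBelow_filter [Fintype L] [IsAtomistic L] (x : L) :
    (univ.filter fun y => y ≤ x ∧ y ≠ ⊥).image atomsBelow =
      (atomsBelow x).powerset.filter (· ∈ venn (atomIci L)) := by
  ext σ
  simp only [mem_image, mem_filter, mem_univ, true_and, mem_powerset, mem_venn_atomIci_iff]
  constructor
  · rintro ⟨y, ⟨hyx, hy⟩, rfl⟩
    exact ⟨atomsBelow_subset_atomsBelow.2 hyx, y, hy, rfl⟩
  · rintro ⟨hσ, y, hy, rfl⟩
    exact ⟨y, ⟨atomsBelow_subset_atomsBelow.1 hσ, hy⟩, rfl⟩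

end AtomFamily

lemma eq_of_forall_sum_filter_eq {L M : Type*} [PartialOrder L] [OrderBot L] [Fintype L]
    [AddCommGroup M] {β γ : L → M}
    (h : ∀ x ≠ ⊥, ∑ y ∈ univ.filter (fun y => y ≤ x ∧ y ≠ ⊥), β y =
      ∑ y ∈ univ.filter (fun y => y ≤ x ∧ y ≠ ⊥), γ y) :
    ∀ x ≠ ⊥, β x = γ x := by
  intro x
  induction x using WellFoundedLT.induction with
  | _ x ih =>
  intro hx
  have hmem : x ∈ univ.filter (fun y => y ≤ x ∧ y ≠ ⊥) := by simp [hx]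
  have hlower : ∑ y ∈ (univ.filter (fun y => y ≤ x ∧ y ≠ ⊥)).erase x, β y =
      ∑ y ∈ (univ.filter (fun y => y ≤ x ∧ y ≠ ⊥)).erase x, γ y := by
    refine sum_congr rfl fun y hy => ?_
    simp only [mem_erase, mem_filter, mem_univ, true_and] at hy
    exact ih y (lt_of_le_of_ne hy.2.1 hy.1) hy.2.2
  have := h x hx
  rw [← sum_erase_add _ _ hmem, ← sum_erase_add _ _ hmem, hlower] at this
  exact add_left_cancel this

section IEVector

variable {L : Type*} [PartialOrder L] [OrderBot L] [IsAtomistic L] [Fintype L]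
  [Fintype {a : L // IsAtom a}] {α : Finset {a : L // IsAtom a} → ℝ}

lemma IsIEVector.sum_atomsBelow_eq_one (hα : IsIEVector (atomIci L) α)
    (hsupp : ∀ σ, σ ∉ venn (atomIci L) → α σ = 0) {x : L} (hx : x ≠ ⊥) :
    ∑ y ∈ univ.filter (fun y => y ≤ x ∧ y ≠ ⊥), α (atomsBelow y) = 1 := by
  have hvenn : atomsBelow x ∈ venn (atomIci L) := mem_venn_atomIci_iff.2 ⟨x, hx, rfl⟩
  rw [← hα.2 _ hvenn, ← sum_image fun y _ z _ h => atomsBelow_injective h,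
    image_atomsBelow_filter]
  exact sum_subset (monotone_filter_right _ fun _ _ h => venn_subset_nerve _ h)
    fun σ hσ hσ' => hsupp σ fun h => hσ' (mem_filter.2 ⟨(mem_filter.1 hσ).1, h⟩)

theorem IsIEVector.sum_abs_eq [OrderTop L] (hα : IsIEVector (atomIci L) α)
    (hsupp : ∀ σ, σ ∉ venn (atomIci L) → α σ = 0) {γ : L → ℝ}
    (hγ : ∀ x ≠ ⊥, ∑ y ∈ univ.filter (fun y => y ≤ x ∧ y ≠ ⊥), γ y = 1) :
    ∑ σ ∈ univ.filter (· ∈ nerve (atomIci L)), |α σ| =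
      ∑ x ∈ univ.filter (· ≠ ⊥), |γ x| := by
  have hαγ : ∀ x ≠ ⊥, α (atomsBelow x) = γ x := eq_of_forall_sum_filter_eq fun x hx => by
    rw [hα.sum_atomsBelow_eq_one hsupp hx, hγ x hx]
  have hvenn : univ.filter (· ∈ venn (atomIci L)) =
      (univ.filter fun y => y ≤ ⊤ ∧ y ≠ ⊥).image atomsBelow := by
    rw [image_atomsBelow_filter, eq_univ_iff_forall.2 fun a => mem_atomsBelow.2 le_top,
      powerset_univ]
  have hsub : univ.filter (· ∈ venn (atomIci L)) ⊆ univ.filter (· ∈ nerve (atomIci L)) :=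
    monotone_filter_right _ fun _ _ h => venn_subset_nerve _ h
  rw [← sum_subset hsub fun σ _ hσ => by simp [hsupp σ (by simpa using hσ)], hvenn,
    sum_image fun y _ z _ h => atomsBelow_injective h]
  simp only [le_top, true_and]
  exact sum_congr rfl fun x hx => by rw [hαγ x (mem_filter.1 hx).2]

end IEVector

theorem CovBy.inf_covBy_of_le_of_not_le {A : Type*} [Lattice A] [IsLowerModularLattice A]
    {a b c : A} (hbc : b ⋖ c) (hac : a ≤ c) (hab : ¬a ≤ b) : a ⊓ b ⋖ a := by
  have hsup : b ⊔ a = c := (hbc.eq_or_eq le_sup_left (sup_le hbc.le hac)).resolve_left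
    fun h => hab (h ▸ le_sup_right)
  rw [inf_comm]
  exact inf_covBy_of_covBy_sup_left (hsup ▸ hbc)

/-- The Möbius function `μ(⊥, X)` of the lattice of subspaces of `F_q^n` at a subspace `X` of
dimension `k`. -/
def subspaceMobius (q k : ℕ) : ℤ := (-1) ^ k * q ^ k.choose 2

lemma subspaceMobius_succ (q k : ℕ) :
    subspaceMobius q (k + 1) = -(q ^ k * subspaceMobius q k) := by
  rw [subspaceMobius, subspaceMobius, Nat.choose_succ_succ', Nat.choose_one_right, pow_add,
    pow_succ]
  ring

lemma abs_subspaceMobius (q k : ℕ) : |subspaceMobius q k| = q ^ k.choose 2 := by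
  simp [subspaceMobius, abs_mul]

namespace Submodule

variable {K V : Type*} [Field K] [AddCommGroup V] [Module K V]

noncomputable instance fintypeOfFinite [Finite V] : Fintype (Submodule K V) :=
  have : Finite (Submodule K V) := Finite.of_injective _ SetLike.coe_injective
  Fintype.ofFinite _

lemma sum_filter_ne_bot_eq_sum_range [Finite V] {M : Type*} [AddCommMonoid M] (f : ℕ → M) :
    ∑ X ∈ univ.filter (· ≠ (⊥ : Submodule K V)), f (finrank K X) =
      ∑ k ∈ range (finrank K V),
        Nat.card {X : Submodule K V // finrank K X = k + 1} • f (k + 1) := by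
  have hmaps : ∀ X ∈ univ.filter (· ≠ (⊥ : Submodule K V)),
      finrank K X - 1 ∈ range (finrank K V) := by
    intro X hX
    have hpos : finrank K X ≠ 0 := fun h => (mem_filter.1 hX).2 (finrank_eq_zero.1 h)
    have := finrank_le X
    exact mem_range.2 (by omega)
  rw [← sum_fiberwise_of_maps_to hmaps]
  refine sum_congr rfl fun k _ => ?_
  have hfiber : (univ.filter (· ≠ (⊥ : Submodule K V))).filter
      (fun X : Submodule K V => finrank K X - 1 = k) =
        univ.filter (fun X : Submodule K V => finrank K X = k + 1) := by
    rw [filter_filter]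
    refine filter_congr fun X _ => ?_
    rw [Ne, ← finrank_eq_zero (R := K)]
    omega
  rw [hfiber, sum_congr rfl fun X hX => by rw [(mem_filter.1 hX).2], sum_const,
    Nat.card_eq_fintype_card, Fintype.card_subtype]

theorem finrank_eq_add_one_of_covBy [FiniteDimensional K V] {p p' : Submodule K V}
    (h : p ⋖ p') : finrank K p' = finrank K p + 1 := by
  obtain ⟨v, hvp', hvp⟩ := SetLike.exists_of_lt h.lt
  have hsup : p ⊔ K ∙ v = p' :=
    (h.eq_or_eq le_sup_left (sup_le h.le ((span_singleton_le_iff_mem _ _).2 hvp'))).resolve_left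
      fun e => hvp (e ▸ mem_sup_right (mem_span_singleton_self v))
  rw [← hsup, finrank_sup_span_singleton hvp]

lemma sup_span_singleton_inf_eq {U H : Submodule K V} {w : V} (hUH : U ≤ H) (hw : w ∉ H) :
    (U ⊔ K ∙ w) ⊓ H = U := by
  rw [sup_inf_assoc_of_le _ hUH, disjoint_iff.1 (disjoint_span_singleton_of_notMem hw).symm,
    sup_bot_eq]

lemma inf_sup_span_singleton_eq_iff {X H : Submodule K V} {w : V} (hX : X ⊓ H ⋖ X)
    (hw : w ∉ H) : X ⊓ H ⊔ K ∙ w = X ↔ w ∈ X := by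
  refine ⟨fun h => h ▸ mem_sup_right (mem_span_singleton_self w), fun hwX => ?_⟩
  refine (hX.eq_or_eq le_sup_left (sup_le inf_le_left
    ((span_singleton_le_iff_mem _ _).2 hwX))).resolve_left fun h => hw ?_
  exact (h ▸ mem_sup_right (mem_span_singleton_self w) : w ∈ X ⊓ H).2

variable [Fintype K] [Fintype V]

local notation "q" => Fintype.card K

lemma card_filter_mem_and_not_mem_of_inf_covBy {A B : Submodule K V} (h : A ⊓ B ⋖ A) :
    #{v : V | v ∈ A ∧ v ∉ B} = q ^ finrank K ↥(A ⊓ B) * (q - 1) := by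
  have hdiff : univ.filter (fun v => v ∈ A ∧ v ∉ B) =
      univ.filter (· ∈ A) \ univ.filter (· ∈ A ⊓ B) := by
    ext v; simp [mem_inf]; tauto
  have hcard (X : Submodule K V) : #{v : V | v ∈ X} = q ^ finrank K X := by
    rw [← Fintype.card_subtype, card_eq_pow_finrank (K := K)]
  rw [hdiff, card_sdiff_of_subset (monotone_filter_right _ fun _ _ hv => hv.1), hcard, hcard,
    finrank_eq_add_one_of_covBy h, pow_succ, Nat.mul_sub_one]

lemma card_filter_inf_eq_of_covBy {H W U : Submodule K V} (hHW : H ⋖ W) (hUH : U ≤ H) :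
    #{X : Submodule K V | X ≤ W ∧ ¬X ≤ H ∧ X ⊓ H = U} =
      q ^ (finrank K H - finrank K U) := by
  -- Double counting: `w ↦ U ⊔ K ∙ w` maps `W \ H` onto these `X`, with fibre `X \ H` over `X`.
  set T := univ.filter fun w : V => w ∈ W ∧ w ∉ H
  set B := univ.filter fun X : Submodule K V => X ≤ W ∧ ¬X ≤ H ∧ X ⊓ H = U
  have hmaps : ∀ w ∈ T, U ⊔ K ∙ w ∈ B := by
    intro w hw
    obtain ⟨hwW, hwH⟩ := (mem_filter.1 hw).2
    refine mem_filter.2 ⟨mem_univ _, ?_, fun h => hwH (h (mem_sup_right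
      (mem_span_singleton_self w))), sup_span_singleton_inf_eq hUH hwH⟩
    exact sup_le (hUH.trans hHW.le) ((span_singleton_le_iff_mem _ _).2 hwW)
  have hfiber : ∀ X ∈ B, #{w ∈ T | U ⊔ K ∙ w = X} = q ^ finrank K U * (q - 1) := by
    intro X hX
    obtain ⟨hXW, hXH, rfl⟩ := (mem_filter.1 hX).2
    have hcov := hHW.inf_covBy_of_le_of_not_le hXW hXH
    rw [← card_filter_mem_and_not_mem_of_inf_covBy hcov]
    congr 1
    ext w
    simp only [T, mem_filter, mem_univ, true_and]
    constructor
    · rintro ⟨⟨-, hwH⟩, hw⟩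
      exact ⟨(inf_sup_span_singleton_eq_iff hcov hwH).1 hw, hwH⟩
    · rintro ⟨hwX, hwH⟩
      exact ⟨⟨hXW hwX, hwH⟩, (inf_sup_span_singleton_eq_iff hcov hwH).2 hwX⟩
  have hWH : W ⊓ H = H := inf_eq_right.2 hHW.le
  have hcount := card_eq_sum_card_fiberwise hmaps
  rw [sum_congr rfl hfiber, sum_const, smul_eq_mul,
    card_filter_mem_and_not_mem_of_inf_covBy (hWH.symm ▸ hHW), hWH,
    ← pow_sub_mul_pow q (finrank_mono hUH), mul_assoc] at hcount
  have hq : 0 < q ^ finrank K U * (q - 1) :=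
    Nat.mul_pos (pow_pos Fintype.card_pos _) (Nat.sub_pos_of_lt Fintype.one_lt_card)
  exact (Nat.eq_of_mul_eq_mul_right hq hcount).symm

lemma sum_subspaceMobius_of_covBy {H W : Submodule K V} (hHW : H ⋖ W) :
    ∑ X ∈ univ.filter (· ≤ W), subspaceMobius q (finrank K X) =
      (1 - q ^ finrank K H) * ∑ X ∈ univ.filter (· ≤ H), subspaceMobius q (finrank K X) := by
  have hbelow : (univ.filter (· ≤ W)).filter (· ≤ H) = univ.filter (· ≤ H) := by
    rw [filter_filter]
    exact filter_congr fun X _ => ⟨And.right, fun h => ⟨h.trans hHW.le, h⟩⟩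
  have hmaps :
      ∀ X ∈ (univ.filter (· ≤ W)).filter (¬· ≤ H), X ⊓ H ∈ univ.filter (· ≤ H) :=
    fun X _ => mem_filter.2 ⟨mem_univ _, inf_le_right⟩
  have hfiber : ∀ U ∈ univ.filter (· ≤ H),
      ∑ X ∈ ((univ.filter (· ≤ W)).filter (¬· ≤ H)).filter (· ⊓ H = U),
        subspaceMobius q (finrank K X) = -(q ^ finrank K H * subspaceMobius q (finrank K U)) := by
    intro U hU
    have hUH : U ≤ H := (mem_filter.1 hU).2
    have hset : ((univ.filter (· ≤ W)).filter (¬· ≤ H)).filter (· ⊓ H = U) =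
        univ.filter fun X : Submodule K V => X ≤ W ∧ ¬X ≤ H ∧ X ⊓ H = U := by
      simp only [filter_filter, and_assoc]
    rw [hset, sum_congr rfl (g := fun _ => subspaceMobius q (finrank K U + 1)), sum_const,
      card_filter_inf_eq_of_covBy hHW hUH, nsmul_eq_mul, subspaceMobius_succ]
    · push_cast
      rw [← pow_sub_mul_pow (q : ℤ) (finrank_mono hUH)]
      ring
    · intro X hX
      obtain ⟨hXW, hXH, rfl⟩ := (mem_filter.1 hX).2
      rw [finrank_eq_add_one_of_covBy (hHW.inf_covBy_of_le_of_not_le hXW hXH)]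
  rw [← sum_filter_add_sum_filter_not _ (· ≤ H), hbelow, ← sum_fiberwise_of_maps_to hmaps,
    sum_congr rfl hfiber, sum_neg_distrib, ← mul_sum]
  ring

theorem sum_subspaceMobius_eq_zero {W : Submodule K V} (hW : W ≠ ⊥) :
    ∑ X ∈ univ.filter (· ≤ W), subspaceMobius q (finrank K X) = 0 := by
  induction W using WellFoundedLT.induction with
  | _ W ih =>
  obtain ⟨H, -, hHW⟩ := exists_le_covBy_of_lt (bot_lt_iff_ne_bot.2 hW)
  rw [sum_subspaceMobius_of_covBy hHW]
  rcases eq_or_ne H ⊥ with rfl | hH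
  · simp
  · rw [ih H hHW.lt hH, mul_zero]

lemma sum_neg_subspaceMobius_eq_one {W : Submodule K V} (hW : W ≠ ⊥) :
    ∑ X ∈ univ.filter (fun X => X ≤ W ∧ X ≠ ⊥),
      -(subspaceMobius q (finrank K X) : ℝ) = 1 := by
  have hset :
      univ.filter (fun X => X ≤ W ∧ X ≠ ⊥) = (univ.filter (· ≤ W)).erase ⊥ := by
    ext X; simp [and_comm]
  have h := sum_subspaceMobius_eq_zero hW
  rw [← add_sum_erase _ _ (mem_filter.2 ⟨mem_univ ⊥, bot_le (a := W)⟩), finrank_bot] at h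
  rw [hset, sum_neg_distrib, neg_eq_iff_eq_neg]
  exact_mod_cast eq_neg_of_add_eq_zero_right h

end Submodule

theorem stmt19_general (K : Type) [Field K] [Fintype K] (d : ℕ)
    (F : {W : Submodule K (Fin (d + 1) → K) // IsAtom W} →
      Set (Submodule K (Fin (d + 1) → K)))
    (hF : ∀ a, F a = {x | a.val ≤ x})
    (α : Finset {W : Submodule K (Fin (d + 1) → K) // IsAtom W} → ℝ)
    (hα : IsIEVector F α) (hsupp : ∀ σ, σ ∉ venn F → α σ = 0) :
    (∑ σ ∈ Finset.univ.filter (· ∈ nerve F), |α σ|) =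
      (∑ k ∈ Finset.range (d + 1), (Fintype.card K : ℝ) ^ (k * (k + 1) / 2) *
        (Nat.card {W : Submodule K (Fin (d + 1) → K) //
          Module.finrank K W = k + 1} : ℝ)) ∧
    (Fintype.card K : ℝ) ^ (d * (d + 1) / 2) ≤
      ∑ σ ∈ Finset.univ.filter (· ∈ nerve F), |α σ| := by
  obtain rfl : F = atomIci _ := funext hF
  have hnorm := (hα.sum_abs_eq hsupp fun W hW => Submodule.sum_neg_subspaceMobius_eq_one hW).trans
    (Submodule.sum_filter_ne_bot_eq_sum_range fun k => |-(subspaceMobius (Fintype.card K) k : ℝ)|)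
  have hterm (k : ℕ) : |-(subspaceMobius (Fintype.card K) (k + 1) : ℝ)| =
      (Fintype.card K : ℝ) ^ (k * (k + 1) / 2) := by
    rw [abs_neg, ← Int.cast_abs, abs_subspaceMobius, Nat.choose_two_right, Nat.add_sub_cancel,
      mul_comm]
    norm_cast
  simp only [finrank_fin_fun, hterm, nsmul_eq_mul'] at hnorm
  refine ⟨hnorm, ?_⟩
  rw [hnorm]
  have : Nonempty {W : Submodule K (Fin (d + 1) → K) // finrank K W = d + 1} :=
    ⟨⟨⊤, by rw [finrank_top, finrank_fin_fun]⟩⟩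
  calc (Fintype.card K : ℝ) ^ (d * (d + 1) / 2)
      ≤ (Fintype.card K : ℝ) ^ (d * (d + 1) / 2) *
          Nat.card {W : Submodule K (Fin (d + 1) → K) // finrank K W = d + 1} :=
        le_mul_of_one_le_right (by positivity) (by exact_mod_cast Nat.card_pos)
    _ ≤ _ := single_le_sum (f := fun k => (Fintype.card K : ℝ) ^ (k * (k + 1) / 2) *
          Nat.card {W : Submodule K (Fin (d + 1) → K) // finrank K W = k + 1})
        (fun k _ => by positivity) (self_mem_range_succ d)

/-- for the lattice `L` of subspaces of `F_q^{d+1}` (the finite field `F_q`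
being modelled by a finite field `K` with `q = |K|` elements) and the family
`F_a = {x ∈ L : a ≤ x}` indexed by the atoms of `L`, the unique IE-vector `α` supported on
the Venn diagram has `ℓ₁`-norm `Σ_{k=0}^d q^{k(k+1)/2}·N_k`, where `N_k` is the number of
subspaces of dimension `k+1`; in particular `‖α‖₁ ≥ q^{d(d+1)/2}`. -/
theorem stmt19 (K : Type) [Field K] [Fintype K] (d : ℕ) (hd : 1 ≤ d)
    (F : {W : Submodule K (Fin (d + 1) → K) // IsAtom W} →
      Set (Submodule K (Fin (d + 1) → K)))
    (hF : ∀ a, F a = {x | a.val ≤ x})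
    (α : Finset {W : Submodule K (Fin (d + 1) → K) // IsAtom W} → ℝ)
    (hα : IsIEVector F α) (hsupp : ∀ σ, σ ∉ venn F → α σ = 0) :
    (∑ σ ∈ Finset.univ.filter (· ∈ nerve F), |α σ|) =
      (∑ k ∈ Finset.range (d + 1), (Fintype.card K : ℝ) ^ (k * (k + 1) / 2) *
        (Nat.card {W : Submodule K (Fin (d + 1) → K) //
          Module.finrank K W = k + 1} : ℝ)) ∧
    (Fintype.card K : ℝ) ^ (d * (d + 1) / 2) ≤
      ∑ σ ∈ Finset.univ.filter (· ∈ nerve F), |α σ| :=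
  stmt19_general K d F hF α hα hsupp
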